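/- For a function f : X × Y → Z between finite sets, if the |X| × |Y| matrix over the rationals whose (x,y) entry is the indicator of f(x,y) = z₀ (for some fixed z₀ ∈ Z) has rank r, then any deterministic communication protocol computing the predicate f(x,y) = z₀ requires at least log₂ r bits of communication. -/
import Mathlib


/-- **Rank lower bound for deterministic communication complexity.**
A deterministic protocol using `c` bits is modeled by its transcript function
`T : X × Y → Fin (2^c)` which satisfies the rectangle property (inputs with equal
transcripts form combinatorial rectangles on which the transcript is constant)
and determines the output of the computed predicate `f(x,y) = z₀`. If the
communication matrix — the `X × Y` 0-1 matrix over `ℚ` whose `(x,y)` entry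
indicates `f x y = z₀` — has rank `r`, then `c ≥ log₂ r`. -/
theorem communication_rank_lower_bound {X Y Z : Type*} [Fintype X] [Fintype Y]
    [DecidableEq Z] (f : X → Y → Z) (z₀ : Z) (c : ℕ) (T : X → Y → Fin (2 ^ c))
    (hrect : ∀ x x' y y', T x y = T x' y' → T x y' = T x y)
    (hcorrect : ∀ x x' y y', T x y = T x' y' → ((f x y = z₀) ↔ (f x' y' = z₀)))
    (r : ℕ)
    (hrank : (Matrix.of fun x y => if f x y = z₀ then (1 : ℚ) else 0).rank = r) :
    Real.logb 2 r ≤ c := by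
  classical
  have key : r ≤ 2 ^ c := by
    set P : Fin (2 ^ c) → Prop := fun t => ∃ p : X × Y, T p.1 p.2 = t ∧ f p.1 p.2 = z₀ with hP
    set A : Matrix X (Fin (2 ^ c)) ℚ := Matrix.of fun x t =>
      if h : P t then (if T x h.choose.2 = t then (1 : ℚ) else 0) else 0 with hA
    set B : Matrix (Fin (2 ^ c)) Y ℚ := Matrix.of fun t y =>
      if h : P t then (if T h.choose.1 y = t then (1 : ℚ) else 0) else 0 with hB
    have hM : (Matrix.of fun x y => if f x y = z₀ then (1 : ℚ) else 0) = A * B := by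
      ext x y
      have hterm : ∀ t : Fin (2 ^ c),
          A x t * B t y = if (t = T x y ∧ f x y = z₀) then (1 : ℚ) else 0 := by
        intro t
        by_cases h : P t
        · obtain ⟨hw1, hw2⟩ := h.choose_spec
          simp only [hA, hB, Matrix.of_apply, dif_pos h]
          by_cases h1 : T x h.choose.2 = t
          · by_cases h2 : T h.choose.1 y = t
            · have hxy : T x y = t := by
                have := hrect x h.choose.1 h.choose.2 y (h1.trans h2.symm)
                rw [this, h1]
              have hfxy : f x y = z₀ :=
                (hcorrect x h.choose.1 y h.choose.2 (hxy.trans hw1.symm)).mpr hw2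
              simp [h1, h2, hxy, hfxy]
            · have : ¬ (t = T x y ∧ f x y = z₀) := by
                rintro ⟨ht, hf⟩
                exact h2 ((hrect h.choose.1 x h.choose.2 y (hw1.trans ht)).trans hw1)
              simp [h1, h2, this]
          · have : ¬ (t = T x y ∧ f x y = z₀) := by
              rintro ⟨ht, hf⟩
              exact h1 ((hrect x h.choose.1 y h.choose.2 (ht.symm.trans hw1.symm)).trans ht.symm)
            simp [h1, this]
        · have : ¬ (t = T x y ∧ f x y = z₀) := by
            rintro ⟨ht, hf⟩
            exact h ⟨(x, y), ht.symm, hf⟩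
          simp [hA, hB, dif_neg h, this]
      simp only [Matrix.mul_apply, hterm, Matrix.of_apply]
      by_cases hf : f x y = z₀ <;> simp [hf]
    have := Matrix.rank_mul_le_left A B
    rw [← hM, hrank] at this
    calc r ≤ A.rank := this
      _ ≤ Fintype.card (Fin (2 ^ c)) := Matrix.rank_le_card_width A
      _ = 2 ^ c := Fintype.card_fin _
  rcases Nat.eq_zero_or_pos r with hr | hr
  · simp [hr]
  · rw [Real.logb_le_iff_le_rpow (by norm_num) (by exact_mod_cast hr)]
    rw [Real.rpow_natCast]
    exact_mod_cast key
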